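/- arXiv:2406.10920 — 2 statements merged into one kernel-verified Lean document; each statement's English description precedes it below -/
import Mathlib

section
/- Let T > 0, h > 0, N ≥ 0, d ∈ ℕ, and let f : (0,T)×ℝᵈ → ℝᵈ satisfy |f_i(t,x)| ≤ 2N for all i, t, x, and let c : (0,T)×ℝᵈ → ℝ. Suppose v, w : [0,T]×ℝᵈ → ℝ are bounded, continuous, differentiable in t on (0,T), and satisfy ∂_t w + c + ∇^h w·f + N h Δ^h w ≤ 0 and ∂_t v + c + ∇^h v·f + N h Δ^h v ≥ 0 on (0,T)×ℝᵈ, together with v(T,x) ≤ w(T,x) for all x ∈ ℝᵈ. Then v(t,x) ≤ w(t,x) for all (t,x) ∈ [0,T]×ℝᵈ. -/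
open Finset

/-- The central-difference transport term `∇^h φ(x) · f = ∑ i, (φ(x+h eᵢ) - φ(x-h eᵢ))/(2h) · fᵢ`. -/
noncomputable def gradDot (d : ℕ) (h : ℝ) (φ : (Fin d → ℝ) → ℝ) (x : Fin d → ℝ)
    (f : Fin d → ℝ) : ℝ :=
  ∑ i, ((φ (x + h • (Pi.single i 1 : Fin d → ℝ)) - φ (x - h • (Pi.single i 1 : Fin d → ℝ))) /
      (2 * h)) * f i

/-- The discrete Laplacian `Δ^h φ(x) = ∑ i, (φ(x+h eᵢ) - 2φ(x) + φ(x-h eᵢ))/h²`. -/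
noncomputable def discLap (d : ℕ) (h : ℝ) (φ : (Fin d → ℝ) → ℝ) (x : Fin d → ℝ) : ℝ :=
  ∑ i, (φ (x + h • (Pi.single i 1 : Fin d → ℝ)) - 2 * φ x +
      φ (x - h • (Pi.single i 1 : Fin d → ℝ))) / h ^ 2

lemma gradDot_sub (d : ℕ) (h : ℝ) (φ ψ : (Fin d → ℝ) → ℝ) (x F : Fin d → ℝ) :
    gradDot d h (fun y => φ y - ψ y) x F = gradDot d h φ x F - gradDot d h ψ x F := by
  unfold gradDot
  rw [← Finset.sum_sub_distrib]
  exact Finset.sum_congr rfl fun i _ => by ring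

lemma discLap_sub (d : ℕ) (h : ℝ) (φ ψ : (Fin d → ℝ) → ℝ) (x : Fin d → ℝ) :
    discLap d h (fun y => φ y - ψ y) x = discLap d h φ x - discLap d h ψ x := by
  unfold discLap
  rw [← Finset.sum_sub_distrib]
  exact Finset.sum_congr rfl fun i _ => by ring

lemma monotone_bound (d : ℕ) (h N : ℝ) (hh : 0 < h) (hN : 0 ≤ N)
    (φ : (Fin d → ℝ) → ℝ) (x F : Fin d → ℝ) (hF : ∀ i, |F i| ≤ 2*N)
    (M : ℝ) (hx : φ x ≤ M)
    (hp : ∀ i, φ (x + h • (Pi.single i 1 : Fin d → ℝ)) ≤ M)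
    (hm : ∀ i, φ (x - h • (Pi.single i 1 : Fin d → ℝ)) ≤ M) :
    gradDot d h φ x F + N * h * discLap d h φ x ≤ (2*N*d/h) * (M - φ x) := by
  unfold gradDot discLap
  rw [Finset.mul_sum, ← Finset.sum_add_distrib]
  have hrw : (2*N*(d:ℝ)/h) * (M - φ x) = ∑ _i : Fin d, (2*N/h) * (M - φ x) := by
    rw [Finset.sum_const, Finset.card_univ, Fintype.card_fin, nsmul_eq_mul]
    ring
  rw [hrw]
  apply Finset.sum_le_sum
  intro i _
  set P := φ (x + h • (Pi.single i 1 : Fin d → ℝ)) with hP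
  set Q := φ (x - h • (Pi.single i 1 : Fin d → ℝ)) with hQ
  have h1 : P ≤ M := hp i
  have h2 : Q ≤ M := hm i
  obtain ⟨hFl, hFr⟩ := abs_le.mp (hF i)
  have hne : h ≠ 0 := ne_of_gt hh
  have hmain : (P - Q) * F i + 2*N*(P - 2*φ x + Q) ≤ 4*N*(M - φ x) := by
    nlinarith [mul_nonneg (by linarith : (0:ℝ) ≤ 2*N + F i) (by linarith : (0:ℝ) ≤ M - P),
      mul_nonneg (by linarith : (0:ℝ) ≤ 2*N - F i) (by linarith : (0:ℝ) ≤ M - Q)]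
  have e1 : (P - Q) / (2 * h) * F i + N * h * ((P - 2 * φ x + Q) / h ^ 2)
      = ((P - Q) * F i + 2*N*(P - 2*φ x + Q)) * (1/(2*h)) := by
    field_simp
  have e2 : 2 * N / h * (M - φ x) = (4*N*(M - φ x)) * (1/(2*h)) := by
    field_simp; ring
  rw [e1, e2]
  exact mul_le_mul_of_nonneg_right hmain (by positivity)

lemma sq_sum_shift (d : ℕ) (σ : ℝ) (x : Fin d → ℝ) (i : Fin d) :
    ∑ j, (x + σ • (Pi.single i 1 : Fin d → ℝ)) j ^ 2
      = (∑ j, x j ^ 2) + (2*σ*x i + σ^2) := by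
  have key : ∀ j, (x + σ • (Pi.single i 1 : Fin d → ℝ)) j ^ 2
      = x j ^ 2 + (if j = i then 2*σ*x j + σ^2 else 0) := by
    intro j
    simp only [Pi.add_apply, Pi.smul_apply, Pi.single_apply, smul_eq_mul]
    split <;> ring
  simp only [key]
  rw [Finset.sum_add_distrib, Finset.sum_ite_eq' Finset.univ i (fun j => 2*σ*x j + σ^2)]
  simp

lemma sq_sum_shift_neg (d : ℕ) (σ : ℝ) (x : Fin d → ℝ) (i : Fin d) :
    ∑ j, (x - σ • (Pi.single i 1 : Fin d → ℝ)) j ^ 2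
      = (∑ j, x j ^ 2) + (-(2*σ*x i) + σ^2) := by
  have : x - σ • (Pi.single i 1 : Fin d → ℝ) = x + (-σ) • (Pi.single i 1 : Fin d → ℝ) := by
    rw [neg_smul, ← sub_eq_add_neg]
  rw [this, sq_sum_shift]
  ring

lemma barrier_bound (d : ℕ) (h N : ℝ) (hh : 0 < h) (hN : 0 ≤ N)
    (E δ : ℝ) (hE : 0 ≤ E) (hδ : 0 ≤ δ) (x F : Fin d → ℝ) (hF : ∀ i, |F i| ≤ 2*N) :
    gradDot d h (fun y => E * (δ * (2 + ∑ j, y j ^ 2))) x F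
      + N * h * discLap d h (fun y => E * (δ * (2 + ∑ j, y j ^ 2))) x
      ≤ E * δ * (2*N*(1+d+h*d)) * (1 + ∑ j, x j ^ 2) := by
  have hq : (0:ℝ) ≤ ∑ j, x j ^ 2 := Finset.sum_nonneg fun j _ => sq_nonneg _
  have step : gradDot d h (fun y => E * (δ * (2 + ∑ j, y j ^ 2))) x F
      + N * h * discLap d h (fun y => E * (δ * (2 + ∑ j, y j ^ 2))) x
      ≤ ∑ i : Fin d, (E * δ * (2*N*(1 + x i ^ 2)) + E * δ * (2*N*h)) := by
    unfold gradDot discLap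
    rw [Finset.mul_sum, ← Finset.sum_add_distrib]
    apply Finset.sum_le_sum
    intro i _
    dsimp only
    rw [sq_sum_shift, sq_sum_shift_neg]
    have hEδ : 0 ≤ E * δ := mul_nonneg hE hδ
    have hxF : 2 * (x i * F i) ≤ 2*N*(1 + x i ^ 2) := by
      obtain ⟨hFl, hFr⟩ := abs_le.mp (hF i)
      nlinarith [mul_nonneg (by linarith : (0:ℝ) ≤ 2*N - F i) (sq_nonneg (x i + 1)),
        mul_nonneg (by linarith : (0:ℝ) ≤ 2*N + F i) (sq_nonneg (x i - 1))]
    have e1 : (E * (δ * (2 + ((∑ j, x j ^ 2) + (2*h*x i + h^2))))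
        - E * (δ * (2 + ((∑ j, x j ^ 2) + (-(2*h*x i) + h^2))))) / (2*h) * F i
        = E * δ * (2 * (x i * F i)) := by
      field_simp; ring
    have e2 : N * h * ((E * (δ * (2 + ((∑ j, x j ^ 2) + (2*h*x i + h^2))))
        - 2 * (E * (δ * (2 + ∑ j, x j ^ 2)))
        + E * (δ * (2 + ((∑ j, x j ^ 2) + (-(2*h*x i) + h^2))))) / h ^ 2)
        = E * δ * (2*N*h) := by
      field_simp; ring
    rw [e1, e2]
    have := mul_le_mul_of_nonneg_left hxF hEδ
    linarith
  refine step.trans ?_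
  have hsum : ∑ i : Fin d, (E * δ * (2*N*(1 + x i ^ 2)) + E * δ * (2*N*h))
      = E * δ * (2*N*(d:ℝ)) + E * δ * (2*N*(∑ j, x j ^ 2)) + E * δ * (2*N*h) * d := by
    rw [Finset.sum_add_distrib, Finset.sum_const, Finset.card_univ, Fintype.card_fin,
      nsmul_eq_mul]
    have : ∑ i : Fin d, E * δ * (2*N*(1 + x i ^ 2))
        = E * δ * (2*N*(d:ℝ)) + E * δ * (2*N*(∑ j, x j ^ 2)) := by
      have e : ∀ i : Fin d, E * δ * (2*N*(1 + x i ^ 2))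
          = E*δ*(2*N) + (E*δ*(2*N)) * x i ^ 2 := fun i => by ring
      simp only [e]
      rw [Finset.sum_add_distrib, Finset.sum_const, Finset.card_univ, Fintype.card_fin,
        nsmul_eq_mul, ← Finset.mul_sum]
      ring
    rw [this]; ring
  rw [hsum]
  have hEδ : 0 ≤ E * δ := mul_nonneg hE hδ
  have hd : (0:ℝ) ≤ (d:ℝ) := Nat.cast_nonneg d
  nlinarith [mul_nonneg (mul_nonneg hEδ hN) hq, mul_nonneg (mul_nonneg (mul_nonneg hEδ hN) hq) hd,
    mul_nonneg (mul_nonneg (mul_nonneg (mul_nonneg hEδ hN) hq) hd) hh.le]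
lemma fin_ineq (E q eps c0 : ℝ) (hE : 1 ≤ E) (hq : 0 ≤ q) (heps : 0 < eps) (hc0 : 0 ≤ c0) :
    E * eps * c0 * (1 + q) + 2*eps ≤ (c0 + 1) * E * (eps*(2+q)) := by
  have h1 : eps * (c0 + 2 + q) ≤ E * (eps * (c0 + 2 + q)) :=
    le_mul_of_one_le_left (by positivity) hE
  nlinarith [mul_nonneg heps.le hq, mul_nonneg (mul_nonneg heps.le hq) hc0]

set_option maxHeartbeats 1000000 in
/-- comparison principle for the semi-discrete linear equation:
if `|fᵢ| ≤ 2N`, `v, w` are bounded, continuous on `[0,T] × ℝᵈ`, differentiable in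
`t` on `(0,T)`, `w` is a supersolution (`∂ₜw + c + ∇^h w·f + NhΔ^h w ≤ 0`),
`v` is a subsolution (`∂ₜv + c + ∇^h v·f + NhΔ^h v ≥ 0`), and `v(T,·) ≤ w(T,·)`,
then `v ≤ w` on `[0,T] × ℝᵈ`. -/
theorem statement14 (T h N : ℝ) (hT : 0 < T) (hh : 0 < h) (hN : 0 ≤ N) (d : ℕ)
    (f : ℝ → (Fin d → ℝ) → Fin d → ℝ)
    (hf : ∀ t ∈ Set.Ioo (0 : ℝ) T, ∀ x : Fin d → ℝ, ∀ i, |f t x i| ≤ 2 * N)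
    (c : ℝ → (Fin d → ℝ) → ℝ)
    (v w vt wt : ℝ → (Fin d → ℝ) → ℝ)
    (hvbdd : ∃ C : ℝ, ∀ t ∈ Set.Icc (0 : ℝ) T, ∀ x, |v t x| ≤ C)
    (hwbdd : ∃ C : ℝ, ∀ t ∈ Set.Icc (0 : ℝ) T, ∀ x, |w t x| ≤ C)
    (hvcont : ContinuousOn (fun q : ℝ × (Fin d → ℝ) => v q.1 q.2)
      (Set.Icc (0 : ℝ) T ×ˢ (Set.univ : Set (Fin d → ℝ))))
    (hwcont : ContinuousOn (fun q : ℝ × (Fin d → ℝ) => w q.1 q.2)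
      (Set.Icc (0 : ℝ) T ×ˢ (Set.univ : Set (Fin d → ℝ))))
    (hvderiv : ∀ t ∈ Set.Ioo (0 : ℝ) T, ∀ x, HasDerivAt (fun s => v s x) (vt t x) t)
    (hwderiv : ∀ t ∈ Set.Ioo (0 : ℝ) T, ∀ x, HasDerivAt (fun s => w s x) (wt t x) t)
    (hsuper : ∀ t ∈ Set.Ioo (0 : ℝ) T, ∀ x,
      wt t x + c t x + gradDot d h (w t) x (f t x) + N * h * discLap d h (w t) x ≤ 0)
    (hsub : ∀ t ∈ Set.Ioo (0 : ℝ) T, ∀ x,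
      0 ≤ vt t x + c t x + gradDot d h (v t) x (f t x) + N * h * discLap d h (v t) x)
    (hterm : ∀ x, v T x ≤ w T x) :
    ∀ t ∈ Set.Icc (0 : ℝ) T, ∀ x, v t x ≤ w t x := by
  obtain ⟨Cv, hCv⟩ := hvbdd
  obtain ⟨Cw, hCw⟩ := hwbdd
  set lam : ℝ := 2*N*(1+(d:ℝ)+h*(d:ℝ)) + 1 with hlamdef
  have hC0nn : (0:ℝ) ≤ 2*N*(1+(d:ℝ)+h*(d:ℝ)) := by positivity
  have hlam1 : 1 ≤ lam := by rw [hlamdef]; linarith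
  set C : ℝ := Cv + Cw with hCdef
  have hCv0 : 0 ≤ Cv := (abs_nonneg _).trans (hCv T ⟨hT.le, le_refl T⟩ 0)
  have hCw0 : 0 ≤ Cw := (abs_nonneg _).trans (hCw T ⟨hT.le, le_refl T⟩ 0)
  have hC0 : 0 ≤ C := by rw [hCdef]; linarith
  have hu_bdd : ∀ t ∈ Set.Icc (0:ℝ) T, ∀ x, |v t x - w t x| ≤ C := by
    intro t ht x
    have h1 := abs_le.mp (hCv t ht x)
    have h2 := abs_le.mp (hCw t ht x)
    rw [abs_le, hCdef]; constructor <;> linarith [h1.1, h1.2, h2.1, h2.2]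
  -- Main claim with barrier
  have key : ∀ ε : ℝ, 0 < ε → ∀ t ∈ Set.Icc (0:ℝ) T, ∀ x : Fin d → ℝ,
      v t x - w t x ≤ Real.exp (lam*(T-t)) * (ε*(2+∑ j, x j ^ 2)) := by
    intro ε hε
    set W : ℝ → (Fin d → ℝ) → ℝ :=
      fun s y => Real.exp (lam*(T-s)) * (ε*(2+∑ j, y j ^ 2)) with hWdef
    set z : ℝ → (Fin d → ℝ) → ℝ := fun s y => v s y - w s y - W s y with hzdef
    suffices hsuf : ∀ t ∈ Set.Icc (0:ℝ) T, ∀ x, z t x ≤ 0 by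
      intro t ht x
      have := hsuf t ht x
      simp only [hzdef, hWdef] at this
      linarith
    -- continuity of z
    have hWcont : Continuous (fun q : ℝ × (Fin d → ℝ) => W q.1 q.2) := by
      apply Continuous.mul
      · exact Real.continuous_exp.comp (continuous_const.mul (continuous_const.sub continuous_fst))
      · apply continuous_const.mul
        apply continuous_const.add
        exact continuous_finset_sum _ fun j _ => ((continuous_apply j).comp continuous_snd).pow 2
    have hzcont : ContinuousOn (fun q : ℝ × (Fin d → ℝ) => z q.1 q.2)
        (Set.Icc (0:ℝ) T ×ˢ (Set.univ : Set (Fin d → ℝ))) :=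
      (hvcont.sub hwcont).sub hWcont.continuousOn
    -- compact box containing all large values
    set ρ : ℝ := Real.sqrt ((2*C+2*ε+1)/ε) with hρdef
    have hρ0 : 0 ≤ ρ := Real.sqrt_nonneg _
    have hρsq : ρ^2 = (2*C+2*ε+1)/ε := Real.sq_sqrt (by positivity)
    set Box : Set (Fin d → ℝ) := Set.pi Set.univ (fun _ => Set.Icc (-ρ) ρ) with hBoxdef
    have hBoxcp : IsCompact (Set.Icc (0:ℝ) T ×ˢ Box) :=
      isCompact_Icc.prod (isCompact_univ_pi fun _ => isCompact_Icc)
    have hT0mem : ((T, (0 : Fin d → ℝ)) ∈ Set.Icc (0:ℝ) T ×ˢ Box) := by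
      refine ⟨⟨hT.le, le_refl T⟩, ?_⟩
      intro j _
      simp only [Pi.zero_apply, Set.mem_Icc]
      constructor <;> linarith
    obtain ⟨⟨tb, xb⟩, hmem, hmax⟩ := hBoxcp.exists_isMaxOn ⟨_, hT0mem⟩
      (hzcont.mono (fun q hq => ⟨hq.1, trivial⟩))
    set M : ℝ := z tb xb with hMdef
    have hqnn : ∀ x : Fin d → ℝ, (0:ℝ) ≤ ∑ j, x j ^ 2 :=
      fun x => Finset.sum_nonneg fun j _ => sq_nonneg _
    have hzT : ∀ x, z T x ≤ -ε := by
      intro x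
      have h1 := hterm x
      have he : Real.exp (lam*(T-T)) = 1 := by rw [sub_self, mul_zero, Real.exp_zero]
      simp only [hzdef, hWdef, he]
      nlinarith [hqnn x]
    -- global max
    have hglob : ∀ s ∈ Set.Icc (0:ℝ) T, ∀ x, z s x ≤ M := by
      intro s hs x
      by_cases hx : x ∈ Box
      · exact hmax (Set.mk_mem_prod hs hx)
      · have hMlb : z T 0 ≤ M := hmax hT0mem
        obtain ⟨j, hj⟩ : ∃ j, ¬ (x j ∈ Set.Icc (-ρ) ρ) := by
          by_contra hcon
          push_neg at hcon
          exact hx (fun j _ => hcon j)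
        have habs : ρ < |x j| := by
          rw [lt_abs]
          by_contra hc
          push_neg at hc
          exact hj ⟨by linarith [hc.2], hc.1⟩
        have hsq : ρ^2 ≤ x j ^ 2 := by
          nlinarith [sq_abs (x j), abs_nonneg (x j)]
        have hqbig : (2*C+2*ε+1)/ε ≤ ∑ j, x j ^ 2 := by
          rw [← hρsq]
          exact hsq.trans (Finset.single_le_sum (f := fun j => x j ^ 2)
            (fun _ _ => sq_nonneg _) (Finset.mem_univ j))
        have hεq : ε * ((2*C+2*ε+1)/ε) = 2*C+2*ε+1 := by field_simp
        have hE1 : 1 ≤ Real.exp (lam*(T-s)) := by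
          rw [show (1:ℝ) = Real.exp 0 from (Real.exp_zero).symm]
          apply Real.exp_le_exp.mpr
          nlinarith [hs.2]
        have hub := (abs_le.mp (hu_bdd s hs x)).2
        have hlb := (abs_le.mp (hu_bdd T ⟨hT.le, le_refl T⟩ 0)).1
        have hzT0 : -C - 2*ε ≤ z T 0 := by
          have he : Real.exp (lam*(T-T)) = 1 := by rw [sub_self, mul_zero, Real.exp_zero]
          simp only [hzdef, hWdef, he]
          have h0 : ∑ j : Fin d, (0:ℝ) ^ 2 = 0 := by simp
          simp only [Pi.zero_apply, h0]
          linarith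
        have hzsx : z s x ≤ -C - 2*ε - 1 := by
          have hA : 2*C+2*ε+1 ≤ ε * (2 + ∑ j, x j ^ 2) := by
            have h1 : ε * ((2*C+2*ε+1)/ε) ≤ ε * (∑ j, x j ^ 2) :=
              mul_le_mul_of_nonneg_left hqbig hε.le
            rw [hεq] at h1
            nlinarith
          have hApos : (0:ℝ) ≤ ε * (2 + ∑ j, x j ^ 2) := by nlinarith [hqnn x]
          have hB2 : 2*C+2*ε+1 ≤ Real.exp (lam*(T-s)) * (ε*(2+∑ j, x j ^ 2)) :=
            hA.trans (le_mul_of_one_le_left hApos hE1)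
          simp only [hzdef, hWdef]
          linarith
        linarith
    -- the max time must be T
    have htbT : tb ≤ T := hmem.1.2
    have htb0 : 0 ≤ tb := hmem.1.1
    rcases eq_or_lt_of_le htbT with heq | hlt
    · -- tb = T : M ≤ -ε ≤ 0
      intro t ht x
      have : M ≤ -ε := by rw [hMdef, heq]; exact hzT xb
      linarith [hglob t ht x]
    · -- tb < T : contradiction
      exfalso
      set Kc : ℝ := 2*N*(d:ℝ)/h with hKcdef
      have hKc0 : 0 ≤ Kc := by positivity
      have hζcont : ContinuousOn (fun s => z s xb) (Set.Icc (0:ℝ) T) := by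
        have hcomp : (fun s => z s xb)
            = (fun q : ℝ × (Fin d → ℝ) => z q.1 q.2) ∘ (fun s => (s, xb)) := rfl
        rw [hcomp]
        exact hzcont.comp (Continuous.continuousOn (by continuity))
          (fun s hs => ⟨hs, trivial⟩)
      have hcontat := hζcont tb hmem.1
      rw [Metric.continuousWithinAt_iff] at hcontat
      obtain ⟨r, hr0, hrr⟩ := hcontat (ε/(Kc+1)) (by positivity)
      set t1 : ℝ := min (tb + r/2) ((tb + T)/2) with ht1def
      have htb_t1 : tb < t1 := lt_min (by linarith) (by linarith)
      have ht1T : t1 < T := lt_of_le_of_lt (min_le_right _ _) (by linarith)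
      have hnear : ∀ s ∈ Set.Icc tb t1, M - z s xb ≤ ε/(Kc+1) := by
        intro s hs
        have hsT : s ∈ Set.Icc (0:ℝ) T := ⟨htb0.trans hs.1, hs.2.trans ht1T.le⟩
        have hdist : dist s tb < r := by
          rw [Real.dist_eq, abs_of_nonneg (by linarith [hs.1])]
          have : s ≤ tb + r/2 := hs.2.trans (min_le_left _ _)
          linarith
        have hlt2 := hrr hsT hdist
        rw [Real.dist_eq] at hlt2
        have := (abs_lt.mp hlt2).1
        rw [hMdef]
        linarith
      -- derivative of the barrier in time
      have hWderiv : ∀ s : ℝ, HasDerivAt (fun u => W u xb)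
          (-lam * Real.exp (lam*(T-s)) * (ε*(2+∑ j, xb j ^ 2))) s := by
        intro s
        have h1 : HasDerivAt (fun u : ℝ => lam*(T-u)) (-lam) s := by
          simpa using ((hasDerivAt_id s).const_sub T).const_mul lam
        have h2 := (h1.exp).mul_const (ε*(2+∑ j, xb j ^ 2))
        have h3 : Real.exp (lam*(T-s)) * -lam * (ε*(2+∑ j, xb j ^ 2))
            = -lam * Real.exp (lam*(T-s)) * (ε*(2+∑ j, xb j ^ 2)) := by ring
        rw [← h3]
        convert h2 using 2
      have hζderiv : ∀ s ∈ Set.Ioo tb t1, HasDerivAt (fun u => z u xb)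
          (vt s xb - wt s xb + lam * Real.exp (lam*(T-s)) * (ε*(2+∑ j, xb j ^ 2))) s := by
        intro s hs
        have hsIoo : s ∈ Set.Ioo (0:ℝ) T := ⟨lt_of_le_of_lt htb0 hs.1, hs.2.trans ht1T⟩
        have hd := ((hvderiv s hsIoo xb).sub (hwderiv s hsIoo xb)).sub (hWderiv s)
        have he : vt s xb - wt s xb + lam * Real.exp (lam*(T-s)) * (ε*(2+∑ j, xb j ^ 2))
            = vt s xb - wt s xb
              - (-lam * Real.exp (lam*(T-s)) * (ε*(2+∑ j, xb j ^ 2))) := by ring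
        rw [he]
        exact hd
      obtain ⟨s, hsmem, hslope⟩ := exists_hasDerivAt_eq_slope (fun u => z u xb)
        (fun s => vt s xb - wt s xb + lam * Real.exp (lam*(T-s)) * (ε*(2+∑ j, xb j ^ 2)))
        htb_t1
        (hζcont.mono (fun u hu => ⟨htb0.trans hu.1, hu.2.trans ht1T.le⟩))
        hζderiv
      have hsIoo : s ∈ Set.Ioo (0:ℝ) T := ⟨lt_of_le_of_lt htb0 hsmem.1, hsmem.2.trans ht1T⟩
      have hsIcc : s ∈ Set.Icc (0:ℝ) T := ⟨hsIoo.1.le, hsIoo.2.le⟩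
      have hzt1 : z t1 xb ≤ M := hglob t1 ⟨htb0.trans htb_t1.le, ht1T.le⟩ xb
      have hder_le : vt s xb - wt s xb
          + lam * Real.exp (lam*(T-s)) * (ε*(2+∑ j, xb j ^ 2)) ≤ 0 := by
        rw [hslope]
        apply div_nonpos_of_nonpos_of_nonneg
        · rw [← hMdef]; linarith
        · linarith
      -- monotone bound for z at time s
      have hFs := hf s hsIoo xb
      have hLz := monotone_bound d h N hh hN (z s) xb (f s xb) hFs M
        (hglob s hsIcc xb) (fun i => hglob s hsIcc _) (fun i => hglob s hsIcc _)
      -- linearity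
      have hlinG : gradDot d h (z s) xb (f s xb)
          = gradDot d h (v s) xb (f s xb) - gradDot d h (w s) xb (f s xb)
            - gradDot d h (W s) xb (f s xb) := by
        have e1 : gradDot d h (z s) xb (f s xb)
            = gradDot d h (fun y => v s y - w s y) xb (f s xb)
              - gradDot d h (W s) xb (f s xb) :=
          gradDot_sub d h (fun y => v s y - w s y) (W s) xb (f s xb)
        have e2 : gradDot d h (fun y => v s y - w s y) xb (f s xb)
            = gradDot d h (v s) xb (f s xb) - gradDot d h (w s) xb (f s xb) :=
          gradDot_sub d h (v s) (w s) xb (f s xb)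
        rw [e1, e2]
      have hlinD : discLap d h (z s) xb
          = discLap d h (v s) xb - discLap d h (w s) xb - discLap d h (W s) xb := by
        have e1 : discLap d h (z s) xb
            = discLap d h (fun y => v s y - w s y) xb - discLap d h (W s) xb :=
          discLap_sub d h (fun y => v s y - w s y) (W s) xb
        have e2 : discLap d h (fun y => v s y - w s y) xb
            = discLap d h (v s) xb - discLap d h (w s) xb :=
          discLap_sub d h (v s) (w s) xb
        rw [e1, e2]
      -- barrier bound
      have hbar : gradDot d h (W s) xb (f s xb) + N * h * discLap d h (W s) xb
          ≤ Real.exp (lam*(T-s)) * ε * (2*N*(1+(d:ℝ)+h*(d:ℝ))) * (1 + ∑ j, xb j ^ 2) :=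
        barrier_bound d h N hh hN (Real.exp (lam*(T-s))) ε
          (Real.exp_nonneg _) hε.le xb (f s xb) hFs
      -- combine everything
      have hsub' := hsub s hsIoo xb
      have hsuper' := hsuper s hsIoo xb
      have hnearS := hnear s ⟨hsmem.1.le, hsmem.2.le⟩
      have hE1 : 1 ≤ Real.exp (lam*(T-s)) := by
        rw [show (1:ℝ) = Real.exp 0 from (Real.exp_zero).symm]
        apply Real.exp_le_exp.mpr
        nlinarith [hsIoo.2.le]
      have hq := hqnn xb
      have hKb : (2*N*(d:ℝ)/h) * (M - z s xb) ≤ ε := by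
        have h1 : Kc * (M - z s xb) ≤ Kc * (ε/(Kc+1)) :=
          mul_le_mul_of_nonneg_left hnearS hKc0
        have h2 : Kc * (ε/(Kc+1)) ≤ ε := by
          rw [mul_div_assoc']
          rw [div_le_iff₀ (by positivity)]
          nlinarith
        rw [hKcdef] at h1
        linarith
      -- final contradiction
      have hfin : Real.exp (lam*(T-s)) * ε * (2*N*(1+(d:ℝ)+h*(d:ℝ))) * (1 + ∑ j, xb j ^ 2)
            + 2*ε
          ≤ lam * Real.exp (lam*(T-s)) * (ε*(2+∑ j, xb j ^ 2)) := by
        rw [hlamdef]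
        exact fin_ineq (Real.exp (lam*(T-s))) (∑ j, xb j ^ 2) ε (2*N*(1+(d:ℝ)+h*(d:ℝ)))
          hE1 hq hε hC0nn
      have hlinD2 : N*h*discLap d h (z s) xb
          = N*h*discLap d h (v s) xb - N*h*discLap d h (w s) xb
            - N*h*discLap d h (W s) xb := by rw [hlinD]; ring
      linarith [hLz, hlinG, hlinD2, hbar, hsub', hsuper', hder_le, hKb, hfin]
  -- conclude
  intro t ht x
  by_contra hlt
  push_neg at hlt
  set q : ℝ := ∑ j, x j ^ 2 with hqdef
  have hq0 : 0 ≤ q := Finset.sum_nonneg fun j _ => sq_nonneg _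
  set B : ℝ := Real.exp (lam*T) * (2 + q) with hBdef
  have hB0 : 0 < B := by rw [hBdef]; positivity
  have hδ0 : 0 < (v t x - w t x)/(2*B) := by
    apply div_pos (by linarith) (by linarith)
  have hkey := key ((v t x - w t x)/(2*B)) hδ0 t ht x
  have hEle : Real.exp (lam*(T-t)) ≤ Real.exp (lam*T) := by
    apply Real.exp_le_exp.mpr
    nlinarith [ht.1]
  have hfac : 0 ≤ (v t x - w t x)/(2*B) * (2+q) :=
    mul_nonneg hδ0.le (by linarith)
  have hstep : Real.exp (lam*(T-t)) * ((v t x - w t x)/(2*B) * (2+q))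
      ≤ Real.exp (lam*T) * ((v t x - w t x)/(2*B) * (2+q)) :=
    mul_le_mul_of_nonneg_right hEle hfac
  have hcalc : Real.exp (lam*T) * ((v t x - w t x)/(2*B) * (2+q))
      = (v t x - w t x)/2 := by
    rw [hBdef]
    field_simp
  rw [hcalc] at hstep
  linarith
end

section
/- Let T > 0, h > 0, N ≥ 0, d ∈ ℕ, ε₁, ε₂ ≥ 0, and let f : (0,T)×ℝᵈ → ℝᵈ satisfy |f_i(t,x)| ≤ 2N for all i, t, x, let L : (0,T)×ℝᵈ → ℝ be bounded with ‖L‖_∞ < ∞, and let g : ℝᵈ → ℝ be bounded with ‖g‖_∞ < ∞. Suppose w : [0,T]×ℝᵈ → ℝ is bounded, continuous, differentiable in t on (0,T), and satisfies |∂_t w + L + ∇^h w·f + N h Δ^h w| ≤ ε₁ on (0,T)×ℝᵈ and |w(T,x) − g(x)| ≤ ε₂ for all x ∈ ℝᵈ. Then |w(t,x)| ≤ ‖g‖_∞ + ε₂ + (T − t)·(‖L‖_∞ + ε₁) for all (t,x) ∈ [0,T]×ℝᵈ. -/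
/-!
Discrete maximum principle. Because `|fᵢ| ≤ 2N`, the operator `∇^h φ · f + N h Δ^h φ` at `x` is
a nonnegative combination of the differences `φ(x ± h eᵢ) - φ(x)`, so it is at most `O(η / h)` at
a point where `φ` comes within `η` of its supremum. If `v` satisfies
`∂ₜ v + ∇^h v · f + N h Δ^h v ≥ θ > 0` and `v(T, ·) ≤ 0` but is somewhere positive, take a
near-maximiser `(t₀, x₀)` of `v` and then a maximiser `t₁ < T` of `v(·, x₀)` on `[t₁, T]`: there
`∂ₜ v ≤ 0`, contradicting the strict inequality once `η` is small. Applied to `±w` minus the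
barrier `‖g‖ + ε₂ + (T - t)(‖L‖ + ε₁ + θ)` this gives the bound for every `θ > 0`.
-/

open Finset

open Set Filter Topology

theorem HasDerivAt.nonpos_of_isMaxOn_Icc {u : ℝ → ℝ} {u' a b : ℝ} (hu : HasDerivAt u u' a)
    (hab : a < b) (hmax : IsMaxOn u (Icc a b) a) : u' ≤ 0 := by
  have h := hmax.localize.hasFDerivWithinAt_nonpos hu.hasFDerivAt.hasFDerivWithinAt
    (sub_mem_posTangentConeAt_of_segment_subset (segment_eq_Icc hab.le).subset)
  simp only [ContinuousLinearMap.toSpanSingleton_apply, smul_eq_mul] at h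
  exact nonpos_of_mul_nonpos_right h (sub_pos.2 hab)

/-- Starting just after `t₀` keeps the maximiser in the open interval even when `t₀ = a`. -/
theorem exists_mem_Ioo_lt_isMaxOn_Icc {u : ℝ → ℝ} {a b c t₀ : ℝ}
    (hu : ContinuousOn u (Icc a b)) (ht₀ : t₀ ∈ Icc a b) (hc : c < u t₀) (hb : u b ≤ c) :
    ∃ t₁ ∈ Ioo a b, c < u t₁ ∧ IsMaxOn u (Icc t₁ b) t₁ := by
  have ht₀b : t₀ < b := ht₀.2.lt_of_ne (by rintro rfl; linarith)
  have := left_nhdsWithin_Ioo_neBot ht₀b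
  obtain ⟨s, hcs, hs⟩ :=
    (((hu t₀ ht₀).mono (Ioo_subset_Icc_self.trans (Icc_subset_Icc ht₀.1 le_rfl))).eventually
      (Ioi_mem_nhds hc) |>.and self_mem_nhdsWithin).exists
  obtain ⟨t₁, ht₁, hmax⟩ := isCompact_Icc.exists_isMaxOn (nonempty_Icc.2 hs.2.le)
    (hu.mono (Icc_subset_Icc (ht₀.1.trans hs.1.le) le_rfl))
  have hct₁ : c < u t₁ := hcs.trans_le (hmax (left_mem_Icc.2 hs.2.le))
  have ht₁b : t₁ < b := ht₁.2.lt_of_ne (by rintro rfl; linarith)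
  exact ⟨t₁, ⟨ht₀.1.trans_lt (hs.1.trans_le ht₁.1), ht₁b⟩, hct₁,
    hmax.on_subset (Icc_subset_Icc ht₁.1 le_rfl)⟩

theorem gradDot_neg (d : ℕ) (h : ℝ) (φ : (Fin d → ℝ) → ℝ) (x f : Fin d → ℝ) :
    gradDot d h (fun y => -φ y) x f = -gradDot d h φ x f := by
  simp only [gradDot, ← Finset.sum_neg_distrib]
  exact Finset.sum_congr rfl fun i _ => by ring

theorem discLap_neg (d : ℕ) (h : ℝ) (φ : (Fin d → ℝ) → ℝ) (x : Fin d → ℝ) :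
    discLap d h (fun y => -φ y) x = -discLap d h φ x := by
  simp only [discLap, ← Finset.sum_neg_distrib]
  exact Finset.sum_congr rfl fun i _ => by ring

theorem gradDot_sub_const (d : ℕ) (h c : ℝ) (φ : (Fin d → ℝ) → ℝ) (x f : Fin d → ℝ) :
    gradDot d h (fun y => φ y - c) x f = gradDot d h φ x f := by
  simp only [gradDot, sub_sub_sub_cancel_right]

theorem discLap_sub_const (d : ℕ) (h c : ℝ) (φ : (Fin d → ℝ) → ℝ) (x : Fin d → ℝ) :
    discLap d h (fun y => φ y - c) x = discLap d h φ x := by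
  simp only [discLap]
  exact Finset.sum_congr rfl fun i _ => by ring

/-- With `|fᵢ| ≤ 2N` the numerical viscosity `N h Δ^h` makes both neighbour weights
`(2N ± fᵢ)/(2h)` nonnegative. -/
theorem centralDiff_add_viscosity_le {h N η fi p m z : ℝ} (hh : 0 < h) (hfi : |fi| ≤ 2 * N)
    (hp : p ≤ z + η) (hm : m ≤ z + η) :
    (p - m) / (2 * h) * fi + N * h * ((p - 2 * z + m) / h ^ 2) ≤ 2 * N * η / h := by
  have hweights : (p - m) / (2 * h) * fi + N * h * ((p - 2 * z + m) / h ^ 2)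
      = ((2 * N + fi) * (p - z) + (2 * N - fi) * (m - z)) / (2 * h) := by
    field_simp
    ring
  have hfi' := abs_le.1 hfi
  rw [hweights, div_le_div_iff₀ (by positivity) hh]
  nlinarith [mul_le_mul_of_nonneg_left (sub_le_iff_le_add'.2 hp) (by linarith : 0 ≤ 2 * N + fi),
    mul_le_mul_of_nonneg_left (sub_le_iff_le_add'.2 hm) (by linarith : 0 ≤ 2 * N - fi)]

theorem gradDot_add_discLap_le {d : ℕ} {h N η : ℝ} (hh : 0 < h) {φ : (Fin d → ℝ) → ℝ}
    {x f : Fin d → ℝ} (hf : ∀ i, |f i| ≤ 2 * N) (hφ : ∀ y, φ y ≤ φ x + η) :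
    gradDot d h φ x f + N * h * discLap d h φ x ≤ 2 * N * d * η / h := by
  rw [gradDot, discLap, Finset.mul_sum, ← Finset.sum_add_distrib]
  calc _ ≤ ∑ _i : Fin d, 2 * N * η / h :=
        Finset.sum_le_sum fun i _ => centralDiff_add_viscosity_le hh (hf i) (hφ _) (hφ _)
    _ = 2 * N * d * η / h := by
        simp only [Finset.sum_const, Finset.card_univ, Fintype.card_fin, nsmul_eq_mul]
        ring

theorem le_zero_of_strict_subsolution {d : ℕ} {T h N θ : ℝ} (hh : 0 < h) (hθ : 0 < θ)
    {f : ℝ → (Fin d → ℝ) → Fin d → ℝ} (hf : ∀ t ∈ Ioo 0 T, ∀ x i, |f t x i| ≤ 2 * N)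
    {v vt : ℝ → (Fin d → ℝ) → ℝ} (hbdd : ∃ C, ∀ t ∈ Icc 0 T, ∀ x, v t x ≤ C)
    (hcont : ∀ x, ContinuousOn (fun t => v t x) (Icc 0 T))
    (hderiv : ∀ t ∈ Ioo 0 T, ∀ x, HasDerivAt (fun s => v s x) (vt t x) t)
    (hsub : ∀ t ∈ Ioo 0 T, ∀ x,
      θ ≤ vt t x + gradDot d h (v t) x (f t x) + N * h * discLap d h (v t) x)
    (hterm : ∀ x, v T x ≤ 0) :
    ∀ t ∈ Icc 0 T, ∀ x, v t x ≤ 0 := by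
  by_contra! ⟨t, ht, x, hpos⟩
  obtain ⟨C, hC⟩ := hbdd
  set V := (fun p : ℝ × (Fin d → ℝ) => v p.1 p.2) '' (Icc 0 T ×ˢ univ)
  have hV : BddAbove V := ⟨C, by rintro _ ⟨⟨s, y⟩, ⟨hs, -⟩, rfl⟩; exact hC s hs y⟩
  have hle : ∀ s ∈ Icc 0 T, ∀ y, v s y ≤ sSup V :=
    fun s hs y => le_csSup hV ⟨(s, y), ⟨hs, mem_univ _⟩, rfl⟩
  obtain ⟨η, hη, hηθ⟩ := exists_pos_mul_lt (mul_pos hθ hh) (2 * N * d)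
  set c := max (sSup V - η) 0
  have hcV : c < sSup V := max_lt (by linarith) (hpos.trans_le (hle t ht x))
  obtain ⟨_, ⟨⟨t₀, x₀⟩, ⟨ht₀, -⟩, rfl⟩, hct₀⟩ :=
    exists_lt_of_lt_csSup ⟨_, mem_image_of_mem _ (mk_mem_prod ht (mem_univ x))⟩ hcV
  obtain ⟨t₁, ht₁, hct₁, hmax⟩ :=
    exists_mem_Ioo_lt_isMaxOn_Icc (hcont x₀) ht₀ hct₀ ((hterm x₀).trans (le_max_right _ _))
  have htime : vt t₁ x₀ ≤ 0 := (hderiv t₁ ht₁ x₀).nonpos_of_isMaxOn_Icc ht₁.2 hmax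
  have hspace := gradDot_add_discLap_le hh (hf t₁ ht₁ x₀) fun y =>
    (hle t₁ (Ioo_subset_Icc_self ht₁) y).trans (by linarith [le_max_left (sSup V - η) 0] :
      sSup V ≤ v t₁ x₀ + η)
  have hsmall : 2 * N * d * η / h < θ := by rwa [div_lt_iff₀ hh]
  linarith [hsub t₁ ht₁ x₀]

/-- The `θ`-steeper barrier turns a subsolution into a strict one; then let `θ → 0⁺`. -/
theorem le_barrier_of_subsolution {d : ℕ} {T h N K C₀ : ℝ} (hh : 0 < h)
    {f : ℝ → (Fin d → ℝ) → Fin d → ℝ} (hf : ∀ t ∈ Ioo 0 T, ∀ x i, |f t x i| ≤ 2 * N)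
    {w wt : ℝ → (Fin d → ℝ) → ℝ} (hbdd : ∃ C, ∀ t ∈ Icc 0 T, ∀ x, w t x ≤ C)
    (hcont : ∀ x, ContinuousOn (fun t => w t x) (Icc 0 T))
    (hderiv : ∀ t ∈ Ioo 0 T, ∀ x, HasDerivAt (fun s => w s x) (wt t x) t)
    (hsub : ∀ t ∈ Ioo 0 T, ∀ x,
      -K ≤ wt t x + gradDot d h (w t) x (f t x) + N * h * discLap d h (w t) x)
    (hterm : ∀ x, w T x ≤ C₀) :
    ∀ t ∈ Icc 0 T, ∀ x, w t x ≤ C₀ + (T - t) * K := by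
  obtain ⟨C, hC⟩ := hbdd
  intro t ht x
  refine ge_of_tendsto (x := 𝓝[>] 0) (f := fun θ => C₀ + (T - t) * (K + θ))
    (tendsto_nhdsWithin_of_tendsto_nhds (Continuous.tendsto' (by fun_prop) _ _ (by simp)))
    (eventually_mem_nhdsWithin.mono fun θ (hθ : 0 < θ) => ?_)
  set b : ℝ → ℝ := fun s => C₀ + (T - s) * (K + θ)
  have hb : Continuous b := by fun_prop
  have hb' : ∀ s, HasDerivAt b (-(K + θ)) s := fun s =>
    (((hasDerivAt_id s).const_sub T).mul_const (K + θ)).const_add C₀ |>.congr_deriv (by simp)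
  obtain ⟨m, hm⟩ := (isCompact_Icc (a := 0) (b := T)).bddBelow_image hb.continuousOn
  have := le_zero_of_strict_subsolution (v := fun s y => w s y - b s)
    (vt := fun s y => wt s y + (K + θ)) hh hθ hf
    ⟨C - m, fun s hs y => by linarith [hC s hs y, hm (mem_image_of_mem b hs)]⟩
    (fun y => (hcont y).sub hb.continuousOn)
    (fun s hs y => ((hderiv s hs y).sub (hb' s)).congr_deriv (sub_neg_eq_add _ _))
    (fun s hs y => by
      simp only [gradDot_sub_const, discLap_sub_const]
      linarith [hsub s hs y])
    (fun y => by simp [b, hterm y]) t ht x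
  simp only [b] at this
  linarith

/-- `CL` and `Cg` are arbitrary upper bounds for `‖L‖_∞` and `‖g‖_∞`; quantified over all of them,
this is the statement with the exact sup-norms. -/
theorem statement15_general (T h N : ℝ) (hh : 0 < h) (d : ℕ)
    (ε₁ ε₂ : ℝ)
    (f : ℝ → (Fin d → ℝ) → Fin d → ℝ)
    (hf : ∀ t ∈ Set.Ioo (0 : ℝ) T, ∀ x : Fin d → ℝ, ∀ i, |f t x i| ≤ 2 * N)
    (L : ℝ → (Fin d → ℝ) → ℝ) (g : (Fin d → ℝ) → ℝ) (CL Cg : ℝ)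
    (hL : ∀ t ∈ Set.Ioo (0 : ℝ) T, ∀ x, |L t x| ≤ CL) (hg : ∀ x, |g x| ≤ Cg)
    (w wt : ℝ → (Fin d → ℝ) → ℝ)
    (hwbdd : ∃ C : ℝ, ∀ t ∈ Set.Icc (0 : ℝ) T, ∀ x, |w t x| ≤ C)
    (hwcont : ContinuousOn (fun q : ℝ × (Fin d → ℝ) => w q.1 q.2)
      (Set.Icc (0 : ℝ) T ×ˢ (Set.univ : Set (Fin d → ℝ))))
    (hwderiv : ∀ t ∈ Set.Ioo (0 : ℝ) T, ∀ x, HasDerivAt (fun s => w s x) (wt t x) t)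
    (hres : ∀ t ∈ Set.Ioo (0 : ℝ) T, ∀ x,
      |wt t x + L t x + gradDot d h (w t) x (f t x) + N * h * discLap d h (w t) x| ≤ ε₁)
    (hterm : ∀ x, |w T x - g x| ≤ ε₂) :
    ∀ t ∈ Set.Icc (0 : ℝ) T, ∀ x, |w t x| ≤ Cg + ε₂ + (T - t) * (CL + ε₁) := by
  obtain ⟨C, hC⟩ := hwbdd
  have hslice : ∀ x, ContinuousOn (fun t => w t x) (Icc 0 T) := fun x =>
    hwcont.comp (Continuous.continuousOn (by fun_prop)) fun t ht => mk_mem_prod ht (mem_univ x)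
  have hupper := le_barrier_of_subsolution (K := CL + ε₁) (C₀ := Cg + ε₂) hh hf
    ⟨C, fun t ht x => (le_abs_self _).trans (hC t ht x)⟩ hslice hwderiv
    (fun t ht x => by linarith [abs_le.1 (hres t ht x), abs_le.1 (hL t ht x)])
    (fun x => by linarith [abs_le.1 (hterm x), abs_le.1 (hg x)])
  have hlower := le_barrier_of_subsolution (K := CL + ε₁) (C₀ := Cg + ε₂) hh hf
    (w := fun t x => -w t x) (wt := fun t x => -wt t x)
    ⟨C, fun t ht x => (neg_le_abs _).trans (hC t ht x)⟩ (fun x => (hslice x).neg)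
    (fun t ht x => (hwderiv t ht x).neg)
    (fun t ht x => by
      simp only [gradDot_neg, discLap_neg]
      linarith [abs_le.1 (hres t ht x), abs_le.1 (hL t ht x)])
    (fun x => by linarith [abs_le.1 (hterm x), abs_le.1 (hg x)])
  exact fun t ht x => abs_le.2 ⟨by linarith [hlower t ht x], hupper t ht x⟩

/-- uniform boundedness: if `|fᵢ| ≤ 2N`, `‖L‖_∞ ≤ CL`,
`‖g‖_∞ ≤ Cg`, and the bounded continuous function `w`, differentiable in `t`,
has PDE residual at most `ε₁` on `(0,T) × ℝᵈ` and terminal error at most `ε₂`,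
then `|w(t,x)| ≤ Cg + ε₂ + (T-t)·(CL + ε₁)` on `[0,T] × ℝᵈ`.  (Quantified over
all upper bounds `CL, Cg`, this is equivalent to the statement with the exact
sup-norms `‖L‖_∞, ‖g‖_∞`.) -/
theorem statement15 (T h N : ℝ) (hT : 0 < T) (hh : 0 < h) (hN : 0 ≤ N) (d : ℕ)
    (ε₁ ε₂ : ℝ) (hε₁ : 0 ≤ ε₁) (hε₂ : 0 ≤ ε₂)
    (f : ℝ → (Fin d → ℝ) → Fin d → ℝ)
    (hf : ∀ t ∈ Set.Ioo (0 : ℝ) T, ∀ x : Fin d → ℝ, ∀ i, |f t x i| ≤ 2 * N)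
    (L : ℝ → (Fin d → ℝ) → ℝ) (g : (Fin d → ℝ) → ℝ) (CL Cg : ℝ)
    (hL : ∀ t ∈ Set.Ioo (0 : ℝ) T, ∀ x, |L t x| ≤ CL) (hg : ∀ x, |g x| ≤ Cg)
    (w wt : ℝ → (Fin d → ℝ) → ℝ)
    (hwbdd : ∃ C : ℝ, ∀ t ∈ Set.Icc (0 : ℝ) T, ∀ x, |w t x| ≤ C)
    (hwcont : ContinuousOn (fun q : ℝ × (Fin d → ℝ) => w q.1 q.2)
      (Set.Icc (0 : ℝ) T ×ˢ (Set.univ : Set (Fin d → ℝ))))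
    (hwderiv : ∀ t ∈ Set.Ioo (0 : ℝ) T, ∀ x, HasDerivAt (fun s => w s x) (wt t x) t)
    (hres : ∀ t ∈ Set.Ioo (0 : ℝ) T, ∀ x,
      |wt t x + L t x + gradDot d h (w t) x (f t x) + N * h * discLap d h (w t) x| ≤ ε₁)
    (hterm : ∀ x, |w T x - g x| ≤ ε₂) :
    ∀ t ∈ Set.Icc (0 : ℝ) T, ∀ x, |w t x| ≤ Cg + ε₂ + (T - t) * (CL + ε₁) :=
  statement15_general T h N hh d ε₁ ε₂ f hf L g CL Cg hL hg w wt hwbdd hwcont hwderiv hres hterm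
end
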